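/- A risk measure ρ on bounded random variables is monetary, comonotonic-additive and Q-based (for Q = {Q1,...,Qn}) if and only if ρ(X) = ∫ X d(ψ∘Q̲) for some function ψ: [0,1]^n → [0,1] such that the set function A ↦ ψ(Q1(A),...,Qn(A)) is standard (increasing, 0 at ∅, 1 at Ω). -/

import Mathlib

open MeasureTheory Set

noncomputable def choquet {Ω : Type*} (c : Set Ω → ℝ) (X : Ω → ℝ) : ℝ :=
  (∫ x in Set.Iio (0 : ℝ), (c {ω | x < X ω} - 1)) + ∫ x in Set.Ioi (0 : ℝ), c {ω | x < X ω}

def Comonotonic {Ω : Type*} (X Y : Ω → ℝ) : Prop :=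
  ∀ ω ω', 0 ≤ (X ω - X ω') * (Y ω - Y ω')

def BddRV {Ω : Type*} (X : Ω → ℝ) : Prop := ∃ M, ∀ ω, |X ω| ≤ M

/-!
For a standard capacity `c`, the layer-cake formula turns the Choquet integral into
`∫₀¹ q_X(p) dp`, with the upper quantile `q_X(p) = sup {x | p < c {x < X}}`. For comonotonic
`X` and `Y` the level sets `{x < X}` and `{y < Y}` form a chain, which forces
`q_{X+Y} = q_X + q_Y`; so the Choquet integral is comonotonic additive, and cash invariant
because constants are comonotonic with everything.

Conversely, a monetary comonotonic-additive `ρ` is determined by `A ↦ ρ (1_A)`: rounding `X` down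
to the grid `-M + ℕ / N` gives a sum of indicators of nested sets, on which `ρ` is additive, and
moves `ρ X` by at most `1 / N`. Comparing `ρ` with the Choquet integral for `c A = ρ (1_A)` gives
the representation, and `ρ` being `Q`-based says exactly that `c A` depends only on
`(Q₁ A, …, Qₙ A)`.
-/

section RandomVariable

variable {Ω : Type*} {X Y : Ω → ℝ}

lemma BddRV.exists_abs_lt (hX : BddRV X) (hY : BddRV Y) :
    ∃ M, (∀ ω, |X ω| < M) ∧ ∀ ω, |Y ω| < M :=
  let ⟨MX, hMX⟩ := hX
  let ⟨MY, hMY⟩ := hY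
  ⟨max MX MY + 1, fun ω => by linarith [hMX ω, le_max_left MX MY],
    fun ω => by linarith [hMY ω, le_max_right MX MY]⟩

lemma BddRV.add (hX : BddRV X) (hY : BddRV Y) : BddRV fun ω => X ω + Y ω :=
  let ⟨MX, hMX⟩ := hX
  let ⟨MY, hMY⟩ := hY
  ⟨MX + MY, fun ω => (abs_add_le _ _).trans (add_le_add (hMX ω) (hMY ω))⟩

lemma BddRV.const (k : ℝ) : BddRV fun _ : Ω => k := ⟨|k|, fun _ => le_rfl⟩

lemma BddRV.add_const (hX : BddRV X) (k : ℝ) : BddRV fun ω => X ω + k := hX.add (BddRV.const k)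

lemma BddRV.indicator (A : Set Ω) (a : ℝ) : BddRV (A.indicator fun _ => a) :=
  ⟨|a|, fun ω => by by_cases hω : ω ∈ A <;> simp [hω]⟩

lemma BddRV.sum {ι : Type*} (s : Finset ι) {f : ι → Ω → ℝ} (hf : ∀ i ∈ s, BddRV (f i)) :
    BddRV fun ω => ∑ i ∈ s, f i ω := by
  rw [← Finset.sum_fn]
  exact Finset.sum_induction f BddRV (fun _ _ h₁ h₂ => h₁.add h₂) (BddRV.const 0) hf

lemma Comonotonic.setOf_lt_subset_or (hXY : Comonotonic X Y) (x y : ℝ) :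
    {ω | x < X ω} ⊆ {ω | y < Y ω} ∨ {ω | y < Y ω} ⊆ {ω | x < X ω} := by
  by_contra! h
  obtain ⟨⟨ω, hxω, hyω⟩, ⟨ω', hyω', hxω'⟩⟩ := And.intro (not_subset.mp h.1) (not_subset.mp h.2)
  simp only [mem_ofPred_eq, not_lt] at hxω hyω hyω' hxω'
  nlinarith [hXY ω ω']

lemma comonotonic_indicator_const {B : Set Ω} {a : ℝ} (ha : 0 ≤ a)
    (hX : ∀ ω ∈ B, ∀ ω', X ω' ≤ X ω) : Comonotonic X (B.indicator fun _ => a) := by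
  intro ω ω'
  by_cases hω : ω ∈ B <;> by_cases hω' : ω' ∈ B <;> simp only [hω, hω', indicator_of_mem,
    indicator_of_notMem, not_false_eq_true, sub_self, mul_zero, le_refl]
  · nlinarith [hX ω hω ω']
  · nlinarith [hX ω' hω' ω]

end RandomVariable

section RiskMeasure

variable {Ω : Type*} [MeasurableSpace Ω]

structure IsMonetaryComonotonicAdditive (ρ : (Ω → ℝ) → ℝ) : Prop where
  add_const : ∀ X : Ω → ℝ, Measurable X → BddRV X → ∀ c : ℝ, ρ (fun ω => X ω + c) = ρ X + c
  mono : ∀ X Y : Ω → ℝ, Measurable X → Measurable Y → BddRV X → BddRV Y →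
    (∀ ω, X ω ≤ Y ω) → ρ X ≤ ρ Y
  add_of_comonotonic : ∀ X Y : Ω → ℝ, Measurable X → Measurable Y → BddRV X → BddRV Y →
    Comonotonic X Y → ρ (fun ω => X ω + Y ω) = ρ X + ρ Y

def IsQBased {ι : Type*} (Q : ι → Measure Ω) (ρ : (Ω → ℝ) → ℝ) : Prop :=
  ∀ X Y : Ω → ℝ, Measurable X → Measurable Y → BddRV X → BddRV Y →
    (∀ i x, Q i {ω | X ω ≤ x} = Q i {ω | Y ω ≤ x}) → ρ X = ρ Y

variable {ρ ρ' : (Ω → ℝ) → ℝ}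

lemma IsMonetaryComonotonicAdditive.congr (hρ : IsMonetaryComonotonicAdditive ρ)
    (h : ∀ X, Measurable X → BddRV X → ρ X = ρ' X) : IsMonetaryComonotonicAdditive ρ' where
  add_const X hX hbX c := by
    rw [← h X hX hbX, ← h _ (hX.add_const c) (hbX.add_const c), hρ.add_const X hX hbX]
  mono X Y hX hY hbX hbY hXY := by
    rw [← h X hX hbX, ← h Y hY hbY]
    exact hρ.mono X Y hX hY hbX hbY hXY
  add_of_comonotonic X Y hX hY hbX hbY hXY := by
    rw [← h X hX hbX, ← h Y hY hbY, ← h (fun ω => X ω + Y ω) (hX.add hY) (hbX.add hbY),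
      hρ.add_of_comonotonic X Y hX hY hbX hbY hXY]

lemma IsQBased.congr {ι : Type*} {Q : ι → Measure Ω} (hρ : IsQBased Q ρ)
    (h : ∀ X, Measurable X → BddRV X → ρ X = ρ' X) : IsQBased Q ρ' :=
  fun X Y hX hY hbX hbY hXY => by
    rw [← h X hX hbX, ← h Y hY hbY, hρ X Y hX hY hbX hbY hXY]

end RiskMeasure

structure IsSurvivalFun (g : ℝ → ℝ) (M : ℝ) : Prop where
  antitone : Antitone g
  eq_one : ∀ x ≤ -M, g x = 1
  eq_zero : ∀ x, M ≤ x → g x = 0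

/-- The union with `Iic (-M)` only matters at `p = 1`: it sets the quantile there to `-M`
instead of `sSup ∅ = 0`, which keeps it antitone on all of `[0, 1]`. -/
noncomputable def quantile (g : ℝ → ℝ) (M p : ℝ) : ℝ := sSup ({x | p < g x} ∪ Iic (-M))

namespace IsSurvivalFun

variable {g : ℝ → ℝ} {M p : ℝ}

lemma pos (h : IsSurvivalFun g M) : 0 < M := by
  by_contra! hM
  have h0 := h.eq_zero (-M) (by linarith)
  rw [h.eq_one (-M) le_rfl] at h0
  exact one_ne_zero h0

lemma le_one (h : IsSurvivalFun g M) (x : ℝ) : g x ≤ 1 := by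
  rcases le_total x (-M) with hx | hx
  · exact (h.eq_one x hx).le
  · exact (h.antitone hx).trans (h.eq_one _ le_rfl).le

lemma nonneg (h : IsSurvivalFun g M) (x : ℝ) : 0 ≤ g x := by
  rcases le_total M x with hx | hx
  · exact (h.eq_zero x hx).ge
  · exact (h.eq_zero _ le_rfl).ge.trans (h.antitone hx)

lemma intervalIntegrable (h : IsSurvivalFun g M) (a b : ℝ) : IntervalIntegrable g volume a b :=
  h.antitone.intervalIntegrable

lemma integral_Iio_add_integral_Ioi (h : IsSurvivalFun g M) :
    (∫ x in Iio 0, (g x - 1)) + ∫ x in Ioi 0, g x = (∫ x in (-M)..M, g x) - M := by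
  have hM := h.pos
  have hIio : ∫ x in Iio 0, (g x - 1) = (∫ x in (-M)..0, g x) - M := by
    rw [setIntegral_eq_of_subset_of_forall_sdiff_eq_zero measurableSet_Iio Ioo_subset_Iio_self
        (s := Ioo (-M) 0), ← integral_Ioc_eq_integral_Ioo,
      ← intervalIntegral.integral_of_le (by linarith),
      intervalIntegral.integral_sub (h.intervalIntegrable _ _) intervalIntegrable_const]
    · simp
    · rintro x ⟨hx0, hx⟩
      rw [h.eq_one x (by simp_all), sub_self]
  have hIoi : ∫ x in Ioi 0, g x = ∫ x in (0)..M, g x := by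
    rw [setIntegral_eq_of_subset_of_forall_sdiff_eq_zero measurableSet_Ioi Ioo_subset_Ioi_self
        (s := Ioo 0 M), ← integral_Ioc_eq_integral_Ioo,
      ← intervalIntegral.integral_of_le hM.le]
    rintro x ⟨hx0, hx⟩
    exact h.eq_zero x (by simp_all)
  have hsplit := intervalIntegral.integral_add_adjacent_intervals (h.intervalIntegrable (-M) 0)
    (h.intervalIntegrable 0 M)
  rw [hIio, hIoi, ← hsplit]
  ring

lemma quantile_eq_sSup (h : IsSurvivalFun g M) (hp : p < 1) :
    quantile g M p = sSup {x | p < g x} := by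
  rw [quantile, union_eq_left.mpr fun x hx => ?_]
  show p < g x
  rw [h.eq_one x hx]
  exact hp

lemma nonempty (h : IsSurvivalFun g M) (hp : p < 1) : {x | p < g x}.Nonempty :=
  ⟨-M, show p < g (-M) by rw [h.eq_one _ le_rfl]; exact hp⟩

lemma subset_Iic (h : IsSurvivalFun g M) (hp : 0 ≤ p) : {x | p < g x} ⊆ Iic M := fun x hx => by
  rw [mem_Iic]
  by_contra! hx'
  have hx : p < g x := hx
  rw [h.eq_zero x hx'.le] at hx
  exact not_lt.mpr hp hx

lemma bddAbove (h : IsSurvivalFun g M) (hp : 0 ≤ p) : BddAbove {x | p < g x} :=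
  ⟨M, h.subset_Iic hp⟩

lemma le_of_quantile_lt (h : IsSurvivalFun g M) (hp0 : 0 ≤ p) (hp1 : p < 1) {x : ℝ}
    (hx : quantile g M p < x) : g x ≤ p := by
  rw [h.quantile_eq_sSup hp1] at hx
  by_contra! hgx
  exact not_le.mpr hx (le_csSup (h.bddAbove hp0) hgx)

lemma quantile_mem_Icc (h : IsSurvivalFun g M) (hp0 : 0 ≤ p) (hp1 : p < 1) :
    quantile g M p ∈ Icc (-M) M := by
  rw [h.quantile_eq_sSup hp1]
  exact ⟨le_csSup (h.bddAbove hp0) (show p < g (-M) by rw [h.eq_one _ le_rfl]; exact hp1),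
    csSup_le (h.nonempty hp1) (h.subset_Iic hp0)⟩

lemma antitoneOn_quantile (h : IsSurvivalFun g M) : AntitoneOn (quantile g M) (Icc 0 1) := by
  intro p hp q _ hpq
  refine csSup_le_csSup ⟨M, union_subset (h.subset_Iic hp.1) fun x hx => ?_⟩
    ⟨-M, Or.inr self_mem_Iic⟩ (union_subset_union_left _ fun x hx => hpq.trans_lt hx)
  exact (mem_Iic.mp hx).trans (by linarith [h.pos])

lemma intervalIntegrable_quantile (h : IsSurvivalFun g M) :
    IntervalIntegrable (quantile g M) volume 0 1 :=
  AntitoneOn.intervalIntegrable (by rw [uIcc_of_le zero_le_one]; exact h.antitoneOn_quantile)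

lemma volume_setOf_lt_inter_Ioc (h : IsSurvivalFun g M) (hp0 : 0 < p) (hp1 : p < 1) :
    volume ({x | p < g x} ∩ Ioc (-M) M) = ENNReal.ofReal (quantile g M p + M) := by
  have hq := h.quantile_mem_Icc hp0.le hp1
  rw [h.quantile_eq_sSup hp1] at hq ⊢
  have hlower : Ioo (-M) (sSup {x | p < g x}) ⊆ {x | p < g x} ∩ Ioc (-M) M := by
    rintro x ⟨hxM, hxq⟩
    obtain ⟨y, hy, hxy⟩ := exists_lt_of_lt_csSup (h.nonempty hp1) hxq
    exact ⟨hy.trans_le (h.antitone hxy.le), hxM, hxq.le.trans hq.2⟩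
  have hupper : {x | p < g x} ∩ Ioc (-M) M ⊆ Ioc (-M) (sSup {x | p < g x}) :=
    fun x ⟨hx, hxM, _⟩ => ⟨hxM, le_csSup (h.bddAbove hp0.le) hx⟩
  apply le_antisymm
  · simpa [Real.volume_Ioc] using measure_mono (μ := volume) hupper
  · simpa [Real.volume_Ioo] using measure_mono (μ := volume) hlower

lemma intervalIntegral_eq_integral_quantile (h : IsSurvivalFun g M) :
    ∫ x in (-M)..M, g x = (∫ p in (0)..1, quantile g M p) + M := by
  have hM := h.pos
  have hlayer := (h.intervalIntegrable (-M) M).1.integral_eq_integral_meas_lt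
    (Filter.Eventually.of_forall h.nonneg)
  have hmeas : ∀ p : ℝ, MeasurableSet {x | p < g x} :=
    fun p => measurableSet_lt measurable_const h.antitone.measurable
  rw [intervalIntegral.integral_of_le (by linarith), hlayer,
    setIntegral_eq_of_subset_of_forall_sdiff_eq_zero measurableSet_Ioi Ioo_subset_Ioi_self
      (s := Ioo 0 1),
    setIntegral_congr_fun measurableSet_Ioo (g := fun p => quantile g M p + M),
    integral_add (h.intervalIntegrable_quantile.1.mono_set Ioo_subset_Ioc_self)
      (integrableOn_const measure_Ioo_lt_top.ne), intervalIntegral.integral_of_le zero_le_one,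
    integral_Ioc_eq_integral_Ioo]
  · simp
  · intro p hp
    dsimp only
    rw [measureReal_def, Measure.restrict_apply (hmeas p), h.volume_setOf_lt_inter_Ioc hp.1 hp.2,
      ENNReal.toReal_ofReal (by linarith [(h.quantile_mem_Icc hp.1.le hp.2).1])]
  · rintro p ⟨hp0, hp⟩
    have hempty : {x | p < g x} = ∅ := eq_empty_of_forall_notMem fun x hx =>
      not_lt.mpr ((h.le_one x).trans (not_lt.mp fun hp1 => hp ⟨hp0, hp1⟩)) hx
    simp [hempty]

end IsSurvivalFun

section Choquet

variable {Ω : Type*} [MeasurableSpace Ω] {c : Set Ω → ℝ} {X Y : Ω → ℝ} {M : ℝ}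

structure IsStandardCapacity (c : Set Ω → ℝ) : Prop where
  mono : ∀ A B : Set Ω, MeasurableSet A → MeasurableSet B → A ⊆ B → c A ≤ c B
  empty : c ∅ = 0
  univ : c univ = 1

lemma IsStandardCapacity.congr {c' : Set Ω → ℝ} (hc : IsStandardCapacity c)
    (h : ∀ A, MeasurableSet A → c A = c' A) : IsStandardCapacity c' where
  mono A B hA hB hAB := (h A hA).symm.trans_le ((hc.mono A B hA hB hAB).trans_eq (h B hB))
  empty := (h ∅ MeasurableSet.empty).symm.trans hc.empty
  univ := (h Set.univ MeasurableSet.univ).symm.trans hc.univ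

lemma IsStandardCapacity.mem_Icc (hc : IsStandardCapacity c) {A : Set Ω}
    (hA : MeasurableSet A) : c A ∈ Icc 0 1 :=
  ⟨hc.empty ▸ hc.mono ∅ A MeasurableSet.empty hA (empty_subset A),
    hc.univ ▸ hc.mono A Set.univ hA MeasurableSet.univ (subset_univ A)⟩

lemma IsStandardCapacity.isSurvivalFun (hc : IsStandardCapacity c) (hX : Measurable X)
    (hM : ∀ ω, |X ω| < M) : IsSurvivalFun (fun x => c {ω | x < X ω}) M where
  antitone x y hxy := hc.mono _ _ (measurableSet_lt measurable_const hX)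
    (measurableSet_lt measurable_const hX) fun ω hω => hxy.trans_lt hω
  eq_one x hx := by
    rw [← hc.univ]
    congr
    exact eq_univ_of_forall fun ω => hx.trans_lt (abs_lt.mp (hM ω)).1
  eq_zero x hx := by
    rw [← hc.empty]
    congr
    exact eq_empty_of_forall_notMem fun ω (hω : x < X ω) =>
      not_lt.mpr hx (hω.trans (abs_lt.mp (hM ω)).2)

lemma choquet_eq_intervalIntegral (hc : IsStandardCapacity c) (hX : Measurable X)
    (hM : ∀ ω, |X ω| < M) : choquet c X = (∫ x in (-M)..M, c {ω | x < X ω}) - M :=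
  (hc.isSurvivalFun hX hM).integral_Iio_add_integral_Ioi

lemma choquet_eq_integral_quantile (hc : IsStandardCapacity c) (hX : Measurable X)
    (hM : ∀ ω, |X ω| < M) :
    choquet c X = ∫ p in (0)..1, quantile (fun x => c {ω | x < X ω}) M p := by
  rw [choquet_eq_intervalIntegral hc hX hM,
    (hc.isSurvivalFun hX hM).intervalIntegral_eq_integral_quantile, add_sub_cancel_right]

lemma choquet_mono (hc : IsStandardCapacity c) (hX : Measurable X) (hY : Measurable Y)
    (hbX : BddRV X) (hbY : BddRV Y) (hXY : ∀ ω, X ω ≤ Y ω) : choquet c X ≤ choquet c Y := by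
  obtain ⟨M, hMX, hMY⟩ := hbX.exists_abs_lt hbY
  rw [choquet_eq_intervalIntegral hc hX hMX, choquet_eq_intervalIntegral hc hY hMY]
  gcongr
  refine intervalIntegral.integral_mono_on (by linarith [(hc.isSurvivalFun hX hMX).pos])
    ((hc.isSurvivalFun hX hMX).intervalIntegrable _ _)
    ((hc.isSurvivalFun hY hMY).intervalIntegrable _ _) fun x _ => ?_
  exact hc.mono _ _ (measurableSet_lt measurable_const hX) (measurableSet_lt measurable_const hY)
    fun ω hω => (hω : x < X ω).trans_le (hXY ω)

namespace IsStandardCapacity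

lemma le_max_of_comonotonic (hc : IsStandardCapacity c) (hX : Measurable X) (hY : Measurable Y)
    (hXY : Comonotonic X Y) {x y z : ℝ} (hz : x + y ≤ z) :
    c {ω | z < X ω + Y ω} ≤ max (c {ω | x < X ω}) (c {ω | y < Y ω}) := by
  have hsub : {ω | z < X ω + Y ω} ⊆ {ω | x < X ω} ∪ {ω | y < Y ω} := by
    intro ω hω
    by_contra! h
    simp only [mem_union, mem_ofPred_eq, not_or, not_lt] at hω h
    linarith
  have hmeas : MeasurableSet {ω | z < X ω + Y ω} :=
    measurableSet_lt measurable_const (hX.add hY)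
  rcases hXY.setOf_lt_subset_or x y with h | h
  · rw [union_eq_right.mpr h] at hsub
    exact (hc.mono _ _ hmeas (measurableSet_lt measurable_const hY) hsub).trans (le_max_right _ _)
  · rw [union_eq_left.mpr h] at hsub
    exact (hc.mono _ _ hmeas (measurableSet_lt measurable_const hX) hsub).trans (le_max_left _ _)

lemma min_le_of_comonotonic (hc : IsStandardCapacity c) (hX : Measurable X) (hY : Measurable Y)
    (hXY : Comonotonic X Y) {x y z : ℝ} (hz : z ≤ x + y) :
    min (c {ω | x < X ω}) (c {ω | y < Y ω}) ≤ c {ω | z < X ω + Y ω} := by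
  have hsub : {ω | x < X ω} ∩ {ω | y < Y ω} ⊆ {ω | z < X ω + Y ω} :=
    fun ω ⟨(hx : x < X ω), (hy : y < Y ω)⟩ => show z < X ω + Y ω by linarith
  have hmeas : MeasurableSet {ω | z < X ω + Y ω} :=
    measurableSet_lt measurable_const (hX.add hY)
  rcases hXY.setOf_lt_subset_or x y with h | h
  · rw [inter_eq_left.mpr h] at hsub
    exact (min_le_left _ _).trans (hc.mono _ _ (measurableSet_lt measurable_const hX) hmeas hsub)
  · rw [inter_eq_right.mpr h] at hsub
    exact (min_le_right _ _).trans (hc.mono _ _ (measurableSet_lt measurable_const hY) hmeas hsub)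

lemma quantile_add_of_comonotonic (hc : IsStandardCapacity c) (hX : Measurable X)
    (hY : Measurable Y) (hXY : Comonotonic X Y) (hMX : ∀ ω, |X ω| < M) (hMY : ∀ ω, |Y ω| < M)
    {p : ℝ} (hp0 : 0 ≤ p) (hp1 : p < 1) :
    quantile (fun z => c {ω | z < X ω + Y ω}) (M + M) p =
      quantile (fun x => c {ω | x < X ω}) M p + quantile (fun y => c {ω | y < Y ω}) M p := by
  have hsX := hc.isSurvivalFun hX hMX
  have hsY := hc.isSurvivalFun hY hMY
  have hsZ := hc.isSurvivalFun (X := fun ω => X ω + Y ω) (M := M + M) (hX.add hY) fun ω =>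
    (abs_add_le _ _).trans_lt (add_lt_add (hMX ω) (hMY ω))
  rw [hsZ.quantile_eq_sSup hp1]
  apply le_antisymm
  · refine csSup_le (hsZ.nonempty hp1) fun z (hz : p < c {ω | z < X ω + Y ω}) => ?_
    by_contra! hlt
    set qX := quantile (fun x => c {ω | x < X ω}) M p
    set qY := quantile (fun y => c {ω | y < Y ω}) M p
    have hx := hsX.le_of_quantile_lt hp0 hp1 (lt_add_of_pos_right qX (half_pos (sub_pos.mpr hlt)))
    have hy := hsY.le_of_quantile_lt hp0 hp1 (lt_add_of_pos_right qY (half_pos (sub_pos.mpr hlt)))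
    have := hc.le_max_of_comonotonic hX hY hXY (x := qX + (z - (qX + qY)) / 2)
      (y := qY + (z - (qX + qY)) / 2) (z := z) (le_of_eq (by ring))
    exact not_lt.mpr (this.trans (max_le hx hy)) hz
  · rw [hsX.quantile_eq_sSup hp1, hsY.quantile_eq_sSup hp1,
      ← csSup_add (hsX.nonempty hp1) (hsX.bddAbove hp0) (hsY.nonempty hp1) (hsY.bddAbove hp0)]
    refine csSup_le_csSup (hsZ.bddAbove hp0) ((hsX.nonempty hp1).add (hsY.nonempty hp1)) ?_
    rintro _ ⟨x, hx, y, hy, rfl⟩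
    exact (lt_min hx hy).trans_le (hc.min_le_of_comonotonic hX hY hXY le_rfl)

end IsStandardCapacity

lemma choquet_add_of_comonotonic (hc : IsStandardCapacity c) (hX : Measurable X)
    (hY : Measurable Y) (hbX : BddRV X) (hbY : BddRV Y) (hXY : Comonotonic X Y) :
    choquet c (fun ω => X ω + Y ω) = choquet c X + choquet c Y := by
  obtain ⟨M, hMX, hMY⟩ := hbX.exists_abs_lt hbY
  have hMZ : ∀ ω, |X ω + Y ω| < M + M := fun ω =>
    (abs_add_le _ _).trans_lt (add_lt_add (hMX ω) (hMY ω))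
  rw [choquet_eq_integral_quantile hc (X := fun ω => X ω + Y ω) (hX.add hY) hMZ,
    choquet_eq_integral_quantile hc hX hMX, choquet_eq_integral_quantile hc hY hMY,
    ← intervalIntegral.integral_add (hc.isSurvivalFun hX hMX).intervalIntegrable_quantile
      (hc.isSurvivalFun hY hMY).intervalIntegrable_quantile]
  exact intervalIntegral.integral_congr_Ioo_of_le zero_le_one fun p hp =>
    hc.quantile_add_of_comonotonic hX hY hXY hMX hMY hp.1.le hp.2

lemma choquet_const (hc : IsStandardCapacity c) (k : ℝ) : choquet c (fun _ => k) = k := by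
  have hM : ∀ _ : Ω, |k| < |k| + 1 := fun _ => lt_add_one _
  have hs := hc.isSurvivalFun measurable_const hM
  rw [choquet_eq_integral_quantile hc measurable_const hM,
    intervalIntegral.integral_congr_Ioo_of_le zero_le_one (g := fun _ => k) fun p hp => ?_]
  · simp
  · dsimp only
    rw [hs.quantile_eq_sSup hp.2, ← csSup_Iio (a := k)]
    congr 1
    ext x
    by_cases hx : x < k <;> simp [hx, hc.univ, hc.empty, hp.2, hp.1.le]

lemma choquet_add_const (hc : IsStandardCapacity c) (hX : Measurable X) (hbX : BddRV X)
    (k : ℝ) : choquet c (fun ω => X ω + k) = choquet c X + k := by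
  rw [choquet_add_of_comonotonic hc hX measurable_const hbX (BddRV.const k)
    (fun ω ω' => by simp), choquet_const hc]

lemma isMonetaryComonotonicAdditive_choquet (hc : IsStandardCapacity c) :
    IsMonetaryComonotonicAdditive (choquet c) where
  add_const _ hX hbX k := choquet_add_const hc hX hbX k
  mono _ _ hX hY hbX hbY hXY := choquet_mono hc hX hY hbX hbY hXY
  add_of_comonotonic _ _ hX hY hbX hbY hXY := choquet_add_of_comonotonic hc hX hY hbX hbY hXY

lemma choquet_indicator_one (hc : IsStandardCapacity c) {A : Set Ω} :
    choquet c (A.indicator 1) = c A := by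
  have h01 : ∀ ω, A.indicator (1 : Ω → ℝ) ω = 0 ∨ A.indicator (1 : Ω → ℝ) ω = 1 := fun ω => by
    by_cases hω : ω ∈ A <;> simp [hω]
  have hneg : ∀ x : ℝ, x < 0 → {ω | x < A.indicator 1 ω} = univ := fun x hx =>
    eq_univ_of_forall fun ω => show x < _ by rcases h01 ω with h | h <;> linarith
  have hmid : ∀ x ∈ Ioo (0 : ℝ) 1, {ω | x < A.indicator 1 ω} = A := fun x hx => by
    ext ω
    by_cases hω : ω ∈ A <;> simp [hω, hx.2, hx.1.le]
  have hbig : ∀ x ∈ Ioi (0 : ℝ) \ Ioo 0 1, {ω | x < A.indicator 1 ω} = ∅ := fun x hx => by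
    have hx1 : 1 ≤ x := not_lt.mp fun hx1 => hx.2 ⟨hx.1, hx1⟩
    exact eq_empty_of_forall_notMem fun ω (hω : x < _) => by rcases h01 ω with h | h <;> linarith
  rw [choquet, setIntegral_congr_fun measurableSet_Iio (g := fun _ => 0)
      fun x hx => by simp [hneg x hx, hc.univ],
    setIntegral_eq_of_subset_of_forall_sdiff_eq_zero measurableSet_Ioi
      (Ioo_subset_Ioi_self : Ioo (0 : ℝ) 1 ⊆ _) fun x hx => by simp [hbig x hx, hc.empty],
    setIntegral_congr_fun measurableSet_Ioo (g := fun _ => c A) fun x hx => by simp [hmid x hx]]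
  simp

lemma isQBased_choquet_comp {ι : Type*} (Q : ι → Measure Ω) [∀ i, IsFiniteMeasure (Q i)]
    (ψ : (ι → ℝ) → ℝ) : IsQBased Q (choquet fun A => ψ fun i => (Q i A).toReal) := by
  intro X Y hX hY _ _ hXY
  have hcompl : ∀ (Z : Ω → ℝ) (x : ℝ), {ω | x < Z ω} = {ω | Z ω ≤ x}ᶜ := fun Z x => by
    ext; simp
  have hlevel : ∀ x,
      (fun i => (Q i {ω | x < X ω}).toReal) = fun i => (Q i {ω | x < Y ω}).toReal :=
    fun x => funext fun i => by
      rw [hcompl X, hcompl Y,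
        measure_compl (measurableSet_le hX measurable_const) (measure_ne_top _ _),
        measure_compl (measurableSet_le hY measurable_const) (measure_ne_top _ _), hXY i x]
  simp only [choquet, hlevel]

end Choquet

section Staircase

variable {Ω : Type*} {X : Ω → ℝ} {M : ℝ} {N : ℕ}

noncomputable def staircase (X : Ω → ℝ) (M : ℝ) (N : ℕ) : Ω → ℝ := fun ω =>
  (∑ k ∈ Finset.range ⌈2 * M * N⌉₊,
    {ω | (k + 1 : ℝ) ≤ N * (X ω + M)}.indicator (fun _ => (N : ℝ)⁻¹) ω) + -M

lemma card_filter_succ_le_eq_floor (K : ℕ) {t : ℝ} (ht0 : 0 ≤ t) (htK : t ≤ K) :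
    ((Finset.range K).filter fun k : ℕ => (k + 1 : ℝ) ≤ t).card = ⌊t⌋₊ := by
  rw [← Finset.card_range ⌊t⌋₊]
  congr 1
  ext k
  have hfloor : k + 1 ≤ ⌊t⌋₊ ↔ (k + 1 : ℝ) ≤ t := by exact_mod_cast Nat.le_floor_iff ht0
  simp only [Finset.mem_filter, Finset.mem_range, ← hfloor]
  constructor
  · rintro ⟨-, hk⟩
    exact hk
  · intro hk
    exact ⟨hk.trans_le (Nat.floor_le_of_le htK), hk⟩

lemma staircase_apply {ω : Ω} (hX : |X ω| ≤ M) (hN : 0 < N) :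
    staircase X M N ω = ⌊N * (X ω + M)⌋₊ / N - M := by
  have hN' : (0 : ℝ) < N := Nat.cast_pos.mpr hN
  obtain ⟨hXl, hXu⟩ := abs_le.mp hX
  have ht0 : 0 ≤ N * (X ω + M) := mul_nonneg hN'.le (by linarith)
  have htK : N * (X ω + M) ≤ ⌈2 * M * N⌉₊ := (by nlinarith : N * (X ω + M) ≤ 2 * M * N).trans
    (Nat.le_ceil _)
  simp only [staircase, indicator_apply, mem_ofPred_eq]
  rw [← Finset.sum_filter, Finset.sum_const, card_filter_succ_le_eq_floor _ ht0 htK, nsmul_eq_mul]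
  ring

lemma staircase_le {ω : Ω} (hX : |X ω| ≤ M) (hN : 0 < N) : staircase X M N ω ≤ X ω := by
  have hN' : (0 : ℝ) < N := Nat.cast_pos.mpr hN
  have ht0 : 0 ≤ N * (X ω + M) := mul_nonneg hN'.le (by linarith [(abs_le.mp hX).1])
  rw [staircase_apply hX hN, sub_le_iff_le_add, div_le_iff₀ hN']
  linarith [Nat.floor_le ht0]

lemma le_staircase_add {ω : Ω} (hX : |X ω| ≤ M) (hN : 0 < N) :
    X ω ≤ staircase X M N ω + (N : ℝ)⁻¹ := by
  have hN' : (0 : ℝ) < N := Nat.cast_pos.mpr hN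
  have key : X ω + M ≤ (⌊N * (X ω + M)⌋₊ + 1) / N := by
    rw [le_div_iff₀ hN']
    linarith [Nat.lt_floor_add_one (N * (X ω + M))]
  rw [add_div, one_div] at key
  rw [staircase_apply hX hN]
  linarith

lemma bddRV_staircase : BddRV (staircase X M N) :=
  (BddRV.sum _ fun _ _ => BddRV.indicator _ _).add_const _

lemma measurable_staircase [MeasurableSpace Ω] (hX : Measurable X) :
    Measurable (staircase X M N) :=
  (Finset.measurable_sum _ fun _ _ =>
    measurable_const.indicator (measurableSet_le measurable_const (by fun_prop))).add_const _

end Staircase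

namespace IsMonetaryComonotonicAdditive

variable {Ω : Type*} [MeasurableSpace Ω] {ρ ρ₁ ρ₂ : (Ω → ℝ) → ℝ} {X : Ω → ℝ} {M : ℝ} {N : ℕ}

lemma map_const (hρ : IsMonetaryComonotonicAdditive ρ) (k : ℝ) : ρ (fun _ => k) = k := by
  have h0 := hρ.add_of_comonotonic (fun _ => 0) (fun _ => 0) measurable_const measurable_const
    (BddRV.const 0) (BddRV.const 0) fun _ _ => by simp
  have hk := hρ.add_const (fun _ => 0) measurable_const (BddRV.const 0) k
  simp only [add_zero, zero_add] at h0 hk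
  linarith

lemma le_add_of_le_add (hρ : IsMonetaryComonotonicAdditive ρ) {X Y : Ω → ℝ} (hX : Measurable X)
    (hY : Measurable Y) (hbX : BddRV X) (hbY : BddRV Y) {δ : ℝ} (h : ∀ ω, X ω ≤ Y ω + δ) :
    ρ X ≤ ρ Y + δ :=
  (hρ.mono X _ hX (hY.add_const δ) hbX (hbY.add_const δ) h).trans_eq (hρ.add_const Y hY hbY δ)

lemma isStandardCapacity_indicator (hρ : IsMonetaryComonotonicAdditive ρ) :
    IsStandardCapacity fun A => ρ (A.indicator 1) where
  mono A B hA hB hAB := hρ.mono _ _ (measurable_const.indicator hA)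
    (measurable_const.indicator hB) (BddRV.indicator A 1) (BddRV.indicator B 1)
    (indicator_le_indicator_of_subset hAB fun _ => zero_le_one)
  empty := by
    rw [indicator_empty]
    exact hρ.map_const 0
  univ := by
    rw [indicator_univ]
    exact hρ.map_const 1

lemma map_sum_indicator (hρ : IsMonetaryComonotonicAdditive ρ) {A : ℕ → Set Ω}
    (hA : ∀ k, MeasurableSet (A k)) (hanti : Antitone A) {a : ℝ} (ha : 0 ≤ a) (K : ℕ) :
    ρ (fun ω => ∑ k ∈ Finset.range K, (A k).indicator (fun _ => a) ω) =
      ∑ k ∈ Finset.range K, ρ ((A k).indicator fun _ => a) := by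
  induction K with
  | zero => simpa using hρ.map_const 0
  | succ K ih =>
    simp only [Finset.sum_range_succ, ← ih]
    refine hρ.add_of_comonotonic _ _
      (Finset.measurable_sum _ fun k _ => measurable_const.indicator (hA k))
      (measurable_const.indicator (hA K)) (BddRV.sum _ fun _ _ => BddRV.indicator _ _)
      (BddRV.indicator _ _) (comonotonic_indicator_const ha fun ω hω ω' => ?_)
    refine Finset.sum_le_sum fun k hk => ?_
    rw [indicator_of_mem (hanti (Finset.mem_range.mp hk).le hω)]
    exact indicator_apply_le' (fun _ => le_rfl) fun _ => ha

lemma map_indicator_inv_natCast (hρ : IsMonetaryComonotonicAdditive ρ) {A : Set Ω}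
    (hA : MeasurableSet A) (hN : 0 < N) :
    ρ (A.indicator fun _ => (N : ℝ)⁻¹) = ρ (A.indicator 1) / N := by
  have hN' : (N : ℝ) ≠ 0 := Nat.cast_ne_zero.mpr hN.ne'
  have h := hρ.map_sum_indicator (A := fun _ => A) (fun _ => hA) antitone_const
    (inv_nonneg.mpr N.cast_nonneg) N
  have hsum : (fun ω => ∑ _k ∈ Finset.range N, A.indicator (fun _ => (N : ℝ)⁻¹) ω) =
      A.indicator 1 := by
    ext ω
    by_cases hω : ω ∈ A <;> simp [hω, hN']
  rw [hsum, Finset.sum_const, Finset.card_range, nsmul_eq_mul] at h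
  rw [h]
  field_simp

lemma map_staircase (hρ : IsMonetaryComonotonicAdditive ρ) (hX : Measurable X) (hN : 0 < N) :
    ρ (staircase X M N) = (∑ k ∈ Finset.range ⌈2 * M * N⌉₊,
      ρ ({ω | (k + 1 : ℝ) ≤ N * (X ω + M)}.indicator 1)) / N - M := by
  have hA : ∀ k : ℕ, MeasurableSet {ω | (k + 1 : ℝ) ≤ N * (X ω + M)} :=
    fun _ => measurableSet_le measurable_const (by fun_prop)
  have hanti : Antitone fun k : ℕ => {ω | (k + 1 : ℝ) ≤ N * (X ω + M)} :=
    fun j k hjk ω (hω : (k + 1 : ℝ) ≤ _) => show (j + 1 : ℝ) ≤ _ by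
      have : (j : ℝ) ≤ k := Nat.cast_le.mpr hjk
      linarith
  unfold staircase
  rw [hρ.add_const _ (Finset.measurable_sum _ fun k _ => measurable_const.indicator (hA k))
      (BddRV.sum _ fun _ _ => BddRV.indicator _ _),
    hρ.map_sum_indicator hA hanti (inv_nonneg.mpr N.cast_nonneg), Finset.sum_div]
  simp only [hρ.map_indicator_inv_natCast (hA _) hN]
  ring

lemma le_of_forall_indicator_eq (hρ₁ : IsMonetaryComonotonicAdditive ρ₁)
    (hρ₂ : IsMonetaryComonotonicAdditive ρ₂)
    (h : ∀ A, MeasurableSet A → ρ₁ (A.indicator 1) = ρ₂ (A.indicator 1))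
    (hX : Measurable X) (hbX : BddRV X) : ρ₁ X ≤ ρ₂ X := by
  obtain ⟨M, hM⟩ := hbX
  refine le_of_forall_pos_le_add fun ε hε => ?_
  obtain ⟨N, hN⟩ := exists_nat_one_div_lt hε
  have hN' : 0 < N + 1 := N.succ_pos
  calc ρ₁ X ≤ ρ₁ (staircase X M (N + 1)) + ((N + 1 : ℕ) : ℝ)⁻¹ :=
        hρ₁.le_add_of_le_add hX (measurable_staircase hX) ⟨M, hM⟩ bddRV_staircase
          fun ω => le_staircase_add (hM ω) hN'
    _ = ρ₂ (staircase X M (N + 1)) + ((N + 1 : ℕ) : ℝ)⁻¹ := by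
        rw [hρ₁.map_staircase hX hN', hρ₂.map_staircase hX hN',
          Finset.sum_congr rfl fun k _ => h _ (measurableSet_le measurable_const (by fun_prop))]
    _ ≤ ρ₂ X + ε := by
        gcongr
        · exact hρ₂.mono _ _ (measurable_staircase hX) hX bddRV_staircase ⟨M, hM⟩
            fun ω => staircase_le (hM ω) hN'
        · push_cast
          rw [← one_div]
          exact hN.le

lemma eq_of_forall_indicator_eq (hρ₁ : IsMonetaryComonotonicAdditive ρ₁)
    (hρ₂ : IsMonetaryComonotonicAdditive ρ₂)
    (h : ∀ A, MeasurableSet A → ρ₁ (A.indicator 1) = ρ₂ (A.indicator 1))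
    (hX : Measurable X) (hbX : BddRV X) : ρ₁ X = ρ₂ X :=
  le_antisymm (le_of_forall_indicator_eq hρ₁ hρ₂ h hX hbX)
    (le_of_forall_indicator_eq hρ₂ hρ₁ (fun A hA => (h A hA).symm) hX hbX)

end IsMonetaryComonotonicAdditive

section QBased

variable {Ω : Type*} [MeasurableSpace Ω]

lemma measure_setOf_indicator_one_le_congr {μ : Measure Ω} [IsFiniteMeasure μ] {A B : Set Ω}
    (hA : MeasurableSet A) (hB : MeasurableSet B) (hAB : μ A = μ B) (x : ℝ) :
    μ {ω | A.indicator 1 ω ≤ x} = μ {ω | B.indicator 1 ω ≤ x} := by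
  classical
  have hpre : ∀ C : Set Ω, {ω | C.indicator (1 : Ω → ℝ) ω ≤ x} =
      (if (1 : ℝ) ∈ Iic x then C else ∅) ∪ if (0 : ℝ) ∈ Iic x then Cᶜ else ∅ :=
    fun C => indicator_const_preimage_eq_union C (Iic x) 1
  rw [hpre A, hpre B]
  split_ifs <;>
    simp [measure_compl hA (measure_ne_top μ A), measure_compl hB (measure_ne_top μ B), hAB]

lemma exists_comp_measures_eq_indicator {ι : Type*} {Q : ι → Measure Ω}
    [∀ i, IsFiniteMeasure (Q i)] {ρ : (Ω → ℝ) → ℝ} (hρ : IsMonetaryComonotonicAdditive ρ)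
    (hQ : IsQBased Q ρ) :
    ∃ ψ : (ι → ℝ) → ℝ, (∀ v, ψ v ∈ Icc 0 1) ∧
      ∀ A, MeasurableSet A → ψ (fun i => (Q i A).toReal) = ρ (A.indicator 1) := by
  let f : {A : Set Ω // MeasurableSet A} → ι → ℝ := fun A i => (Q i A).toReal
  let g : {A : Set Ω // MeasurableSet A} → ℝ := fun A => ρ (A.1.indicator 1)
  have hfg : g.FactorsThrough f := fun A B hAB =>
    hQ _ _ (measurable_const.indicator A.2) (measurable_const.indicator B.2)
      (BddRV.indicator _ 1) (BddRV.indicator _ 1) fun i =>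
        measure_setOf_indicator_one_le_congr A.2 B.2 <|
          (ENNReal.toReal_eq_toReal_iff' (measure_ne_top _ _) (measure_ne_top _ _)).mp
            (congrFun hAB i)
  refine ⟨Function.extend f g 0, fun v => ?_, fun A hA => hfg.extend_apply 0 ⟨A, hA⟩⟩
  by_cases hv : ∃ A, f A = v
  · obtain ⟨A, rfl⟩ := hv
    rw [hfg.extend_apply]
    exact hρ.isStandardCapacity_indicator.mem_Icc A.2
  · rw [Function.extend_apply' _ _ _ hv]
    exact ⟨le_rfl, zero_le_one⟩

end QBased

theorem q_based_comonotonic_additive_characterization_general {Ω : Type*} [MeasurableSpace Ω]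
    (n : ℕ) (Q : Fin n → Measure Ω) (hprob : ∀ i, IsProbabilityMeasure (Q i))
    (ρ : (Ω → ℝ) → ℝ) :
    (((∀ X : Ω → ℝ, Measurable X → BddRV X → ∀ c : ℝ,
          ρ (fun ω => X ω + c) = ρ X + c) ∧
      (∀ X Y : Ω → ℝ, Measurable X → Measurable Y → BddRV X → BddRV Y →
          (∀ ω, X ω ≤ Y ω) → ρ X ≤ ρ Y) ∧
      (∀ X Y : Ω → ℝ, Measurable X → Measurable Y → BddRV X → BddRV Y →
          Comonotonic X Y → ρ (fun ω => X ω + Y ω) = ρ X + ρ Y) ∧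
      (∀ X Y : Ω → ℝ, Measurable X → Measurable Y → BddRV X → BddRV Y →
          (∀ i : Fin n, ∀ x : ℝ, Q i {ω | X ω ≤ x} = Q i {ω | Y ω ≤ x}) → ρ X = ρ Y))
      ↔
     (∃ ψ : (Fin n → ℝ) → ℝ,
        (∀ x, ψ x ∈ Set.Icc (0 : ℝ) 1) ∧
        ψ (fun i => (Q i (∅ : Set Ω)).toReal) = 0 ∧
        ψ (fun i => (Q i (Set.univ : Set Ω)).toReal) = 1 ∧
        (∀ A B : Set Ω, MeasurableSet A → MeasurableSet B → A ⊆ B →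
            ψ (fun i => (Q i A).toReal) ≤ ψ (fun i => (Q i B).toReal)) ∧
        (∀ X : Ω → ℝ, Measurable X → BddRV X →
            ρ X = choquet (fun A => ψ (fun i => (Q i A).toReal)) X))) := by
  have := hprob
  constructor
  · rintro ⟨hcash, hmono, hadd, hQ⟩
    have hρ : IsMonetaryComonotonicAdditive ρ := ⟨hcash, hmono, hadd⟩
    obtain ⟨ψ, hψ01, hψ⟩ := exists_comp_measures_eq_indicator hρ hQ
    have hc : IsStandardCapacity fun A => ψ fun i => (Q i A).toReal :=
      hρ.isStandardCapacity_indicator.congr fun A hA => (hψ A hA).symm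
    refine ⟨ψ, hψ01, hc.empty, hc.univ, hc.mono, fun X hX hbX =>
      hρ.eq_of_forall_indicator_eq (isMonetaryComonotonicAdditive_choquet hc) ?_ hX hbX⟩
    intro A hA
    rw [choquet_indicator_one hc, hψ A hA]
  · rintro ⟨ψ, -, hempty, huniv, hmono, hρ⟩
    have hc : IsStandardCapacity fun A => ψ fun i => (Q i A).toReal := ⟨hmono, hempty, huniv⟩
    have hchoquet := fun X hX hbX => (hρ X hX hbX).symm
    have hρ' := (isMonetaryComonotonicAdditive_choquet hc).congr hchoquet
    exact ⟨hρ'.add_const, hρ'.mono, hρ'.add_of_comonotonic,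
      (isQBased_choquet_comp Q ψ).congr hchoquet⟩

theorem q_based_comonotonic_additive_characterization {Ω : Type*} [MeasurableSpace Ω]
    (n : ℕ) (hn : 0 < n) (Q : Fin n → Measure Ω) (hprob : ∀ i, IsProbabilityMeasure (Q i))
    (ρ : (Ω → ℝ) → ℝ) :
    (((∀ X : Ω → ℝ, Measurable X → BddRV X → ∀ c : ℝ,
          ρ (fun ω => X ω + c) = ρ X + c) ∧
      (∀ X Y : Ω → ℝ, Measurable X → Measurable Y → BddRV X → BddRV Y →
          (∀ ω, X ω ≤ Y ω) → ρ X ≤ ρ Y) ∧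
      (∀ X Y : Ω → ℝ, Measurable X → Measurable Y → BddRV X → BddRV Y →
          Comonotonic X Y → ρ (fun ω => X ω + Y ω) = ρ X + ρ Y) ∧
      (∀ X Y : Ω → ℝ, Measurable X → Measurable Y → BddRV X → BddRV Y →
          (∀ i : Fin n, ∀ x : ℝ, Q i {ω | X ω ≤ x} = Q i {ω | Y ω ≤ x}) → ρ X = ρ Y))
      ↔
     (∃ ψ : (Fin n → ℝ) → ℝ,
        (∀ x, ψ x ∈ Set.Icc (0 : ℝ) 1) ∧
        ψ (fun i => (Q i (∅ : Set Ω)).toReal) = 0 ∧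
        ψ (fun i => (Q i (Set.univ : Set Ω)).toReal) = 1 ∧
        (∀ A B : Set Ω, MeasurableSet A → MeasurableSet B → A ⊆ B →
            ψ (fun i => (Q i A).toReal) ≤ ψ (fun i => (Q i B).toReal)) ∧
        (∀ X : Ω → ℝ, Measurable X → BddRV X →
            ρ X = choquet (fun A => ψ (fun i => (Q i A).toReal)) X))) :=
  q_based_comonotonic_additive_characterization_general n Q hprob ρ
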